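/- arXiv:cs/0403008 — 5 statements merged into one kernel-verified Lean document; each statement's English description precedes it below -/
import Mathlib

section
/- Let t be transcendental over an algebraically closed field K̄, H₁,…,H_k symmetric n×n matrices over K, and D_j = diag(1^{j-1},…,n^{j-1}). Then for every field F containing K(t) and every 0 ≠ y ∈ F̄^k, the rank of ∑_{j=1}^k y_j (H_j + t·D_j) is at least n-k+1. -/
/-!
Pick a valuation ring `A ⊆ F` containing `K` in which `t⁻¹` lies in the maximal ideal: since `t⁻¹`
is transcendental, `K[t⁻¹]` localised at `(t⁻¹)` embeds in `F` as a local ring, and a valuation ring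
of `F` dominates it. Rescale `y` so that every `y_j` lies in `A` and one of them is `1`. Divided by
`t`, the matrix becomes `∑ y_j (t⁻¹ H_j + D_j)`, whose reduction modulo the maximal ideal of `A` is
`diag (p 1, …, p n)` for the nonzero polynomial `p = ∑ ȳ_j X^(j-1)` of degree `< k`. The residue
field has characteristic zero, so at most `k - 1` of the `p i` vanish: some principal minor of size
`n - k + 1` is a unit modulo the maximal ideal, hence nonzero in `F`.
-/

open Matrix Polynomial IsLocalRing

namespace Matrix

section Rank

variable {m n R F L : Type*} [Fintype n]

theorem le_rank_of_det_submatrix_ne_zero [Field F] {r : ℕ} (M : Matrix m n F)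
    (f : Fin r → m) (g : Fin r → n) (h : (M.submatrix f g).det ≠ 0) : r ≤ M.rank :=
  calc r = (M.submatrix f g).rank := by
        rw [rank_of_isUnit _ ((isUnit_iff_isUnit_det _).2 h.isUnit), Fintype.card_fin]
    _ ≤ M.rank := rank_submatrix_le M f g

theorem le_rank_map_of_det_submatrix_map_ne_zero [CommRing R] [Field F] [Field L]
    {ι : R →+* F} (hι : Function.Injective ι) (φ : R →+* L) {r : ℕ} (N : Matrix m n R)
    (f : Fin r → m) (g : Fin r → n) (h : ((N.map φ).submatrix f g).det ≠ 0) :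
    r ≤ (N.map ι).rank := by
  refine le_rank_of_det_submatrix_ne_zero _ f g fun h0 => h ?_
  rw [submatrix_map, ← RingHom.mapMatrix_apply, ← RingHom.map_det] at h0 ⊢
  rw [(map_eq_zero_iff ι hι).1 h0, map_zero]

theorem le_rank_map_of_map_eq_diagonal [DecidableEq n] [CommRing R] [Field F] [Field L]
    {ι : R →+* F} (hι : Function.Injective ι) (φ : R →+* L) (N : Matrix n n R) {q : n → L}
    (hq : N.map φ = diagonal q) : Nat.card {i // q i ≠ 0} ≤ (N.map ι).rank := by
  set f : Fin (Nat.card {i // q i ≠ 0}) → n := Subtype.val ∘ (Finite.equivFin _).symm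
  have hf : Function.Injective f := Subtype.val_injective.comp (Equiv.injective _)
  refine le_rank_map_of_det_submatrix_map_ne_zero hι φ N f f ?_
  rw [hq, submatrix_diagonal _ _ hf, det_diagonal]
  exact Finset.prod_ne_zero_iff.2 fun i _ => ((Finite.equivFin _).symm i).2

end Rank

/-- `powDiagonal R n j` is the paper's `D_(j+1) = diag (1^j, …, n^j)`. -/
def powDiagonal (R : Type*) [Semiring R] (n j : ℕ) : Matrix (Fin n) (Fin n) R :=
  diagonal fun i => ((i : ℕ) + 1 : R) ^ j

@[simp]
theorem map_powDiagonal_apply {R S : Type*} [Semiring R] [Semiring S] (f : R →+* S) (n j : ℕ)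
    (a b : Fin n) :
    f (powDiagonal R n j a b) = powDiagonal S n j a b := by
  by_cases hab : a = b <;> simp [powDiagonal, hab]

theorem sum_smul_powDiagonal {R : Type*} [CommSemiring R] [DecidableEq R] {k : ℕ} (c : Fin k → R)
    (n : ℕ) :
    ∑ j : Fin k, c j • powDiagonal R n j =
      diagonal fun i : Fin n => (ofFn k c).eval ((i : ℕ) + 1 : R) := by
  ext a b
  by_cases hab : a = b
  · simp [hab, powDiagonal, Matrix.sum_apply, ofFn_eq_sum_monomial, eval_finsetSum]
  · simp [hab, powDiagonal, Matrix.sum_apply]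

end Matrix

theorem Polynomial.card_eval_natCast_succ_ne_zero {L : Type*} [Field L] [CharZero L]
    {p : L[X]} (hp : p ≠ 0) (n : ℕ) :
    n - p.natDegree ≤ Nat.card {i : Fin n // p.eval ((i : ℕ) + 1 : L) ≠ 0} := by
  classical
  rw [Nat.card_eq_fintype_card, Fintype.card_subtype, Finset.filter_not,
    Finset.card_sdiff_of_subset (Finset.filter_subset _ _), Finset.card_univ, Fintype.card_fin]
  refine Nat.sub_le_sub_left ?_ n
  have hinj : Function.Injective fun i : Fin n => ((i : ℕ) + 1 : L) := fun a b hab =>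
    Fin.ext (by simpa using hab)
  rw [← Finset.card_map ⟨_, hinj⟩]
  refine card_le_degree_of_subset_roots fun x hx => ?_
  obtain ⟨i, hi, rfl⟩ := Finset.mem_map.1 (Finset.mem_def.2 hx)
  exact (mem_roots hp).2 (Finset.mem_filter.1 hi).2

namespace ValuationSubring

theorem exists_algebraMap_mem_and_mem_nonunits {K F : Type*} [Field K] [Field F] [Algebra K F]
    {s : F} (hs : Transcendental K s) :
    ∃ A : ValuationSubring F, (∀ c : K, algebraMap K F c ∈ A) ∧ s ∈ A.nonunits := by
  set P : Ideal K[X] := Ideal.span {X}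
  have : P.IsPrime := (Ideal.span_singleton_prime X_ne_zero).2 prime_X
  have hunit : ∀ c : P.primeCompl, IsUnit (aeval s (c : K[X])) := fun ⟨c, hc⟩ =>
    isUnit_iff_ne_zero.2 fun h0 => hc (transcendental_iff.1 hs c h0 ▸ P.zero_mem)
  set g : Localization.AtPrime P →+* F := IsLocalization.lift (g := (aeval s).toRingHom) hunit
  have hg : ∀ p : K[X], g (algebraMap K[X] _ p) = aeval s p := IsLocalization.lift_eq _
  obtain ⟨A, hA, hloc⟩ := IsLocalRing.exists_factor_valuationRing g
  refine ⟨A, fun c => by simpa [hg] using hA (algebraMap K[X] _ (C c)), ?_⟩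
  have hsA : s ∈ A := by simpa [hg] using hA (algebraMap K[X] _ X)
  rw [mem_nonunits_iff, ← valuation_lt_one_iff A ⟨s, hsA⟩, mem_maximalIdeal,
    _root_.mem_nonunits_iff]
  intro hu
  have hgX : g.codRestrict A.toSubring hA (algebraMap K[X] _ X) = ⟨s, hsA⟩ :=
    Subtype.ext ((hg X).trans (aeval_X s))
  have hX : IsUnit (algebraMap K[X] (Localization.AtPrime P) X) := hloc.1 _ (hgX ▸ hu)
  exact (IsLocalization.AtPrime.isUnit_to_map_iff _ P X).1 hX (Ideal.mem_span_singleton_self X)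

theorem exists_div_mem {F ι : Type*} [Field F] [Finite ι] (A : ValuationSubring F)
    {y : ι → F} (hy : y ≠ 0) : ∃ m, y m ≠ 0 ∧ ∀ j, y j / y m ∈ A := by
  obtain ⟨j₀, hj₀⟩ := Function.ne_iff.1 hy
  have : Nonempty ι := ⟨j₀⟩
  obtain ⟨m, hm⟩ := Finite.exists_max fun j => A.valuation (y j)
  have hym : y m ≠ 0 := fun h => hj₀ <| by simpa [h] using hm j₀
  refine ⟨m, hym, fun j => A.mem_of_valuation_le_one _ ?_⟩
  rw [map_div₀, div_le_one₀ (by simpa [zero_lt_iff] using hym)]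
  exact hm j

end ValuationSubring

theorem IsLocalRing.le_rank_map_sum_smul_add_powDiagonal {R F : Type*} [CommRing R]
    [IsLocalRing R] [CharZero (ResidueField R)] [Field F] {ι : R →+* F}
    (hι : Function.Injective ι) {n k : ℕ} (hkn : k ≤ n) {s : R} (hs : s ∈ maximalIdeal R)
    (B : Fin k → Matrix (Fin n) (Fin n) R) {z : Fin k → R} {m : Fin k} (hzm : IsUnit (z m)) :
    n - k + 1 ≤ (∑ j, ι (z j) • (ι s • (B j).map ι + powDiagonal F n j)).rank := by
  classical
  set N := ∑ j, z j • (s • B j + powDiagonal R n j)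
  have hN : N.map ι = ∑ j, ι (z j) • (ι s • (B j).map ι + powDiagonal F n j) := by
    ext a b
    simp [N, Matrix.sum_apply, map_sum]
  set p := ofFn k (residue R ∘ z)
  have hres : N.map (residue R) =
      diagonal fun i : Fin n => p.eval ((i : ℕ) + 1 : ResidueField R) := by
    rw [← sum_smul_powDiagonal]
    ext a b
    simp [N, Matrix.sum_apply, map_sum, (residue_eq_zero_iff s).2 hs]
  have hp : p ≠ 0 := fun h0 => (residue_ne_zero_iff_isUnit _).2 hzm <| by
    simpa [p, ofFn_coeff_eq_val_of_lt _ m.isLt] using congrArg (coeff · m) h0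
  have hdeg : p.natDegree < k := ofFn_natDegree_lt (Fin.pos m) _
  calc n - k + 1 ≤ n - p.natDegree := by omega
    _ ≤ _ := card_eval_natCast_succ_ne_zero hp n
    _ ≤ (N.map ι).rank := le_rank_map_of_map_eq_diagonal hι _ N hres
    _ = _ := by rw [hN]

theorem stmt7_general {K F : Type*} [Field K] [CharZero K] [Field F] [Algebra K F]
    {n k : ℕ} (hkn : k ≤ n)
    (t : F) (ht : Transcendental K t)
    (H : Fin k → Matrix (Fin n) (Fin n) K)
    (y : Fin k → F) (hy : y ≠ 0) :
    n - k + 1 ≤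
      (∑ j : Fin k, y j •
        ((H j).map (algebraMap K F) +
          t • Matrix.diagonal (fun i : Fin n => ((i : ℕ) + 1 : F) ^ (j : ℕ)))).rank := by
  have ht₀ : t ≠ 0 := fun h => ht (h ▸ isAlgebraic_zero)
  obtain ⟨A, hKA, htA⟩ := ValuationSubring.exists_algebraMap_mem_and_mem_nonunits
    (fun h => ht (IsAlgebraic.inv_iff.1 h) : Transcendental K t⁻¹)
  obtain ⟨m, hym, hyA⟩ := A.exists_div_mem hy
  let ψ : K →+* A := (algebraMap K F).codRestrict A.toSubring hKA
  have : CharZero (ResidueField A) :=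
    (RingHom.charZero_iff ((residue A).comp ψ).injective).1 inferInstance
  have hrank := le_rank_map_sum_smul_add_powDiagonal A.subtype_injective hkn
    ((A.valuation_lt_one_iff ⟨t⁻¹, A.mem_of_valuation_le_one _ htA.le⟩).2 htA)
    (fun j => (H j).map ψ) (z := fun j => ⟨y j / y m, hyA j⟩) (m := m)
    (by convert isUnit_one; simp [hym])
  have hrescale : ∑ j : Fin k, y j • ((H j).map (algebraMap K F) +
        t • Matrix.diagonal (fun i : Fin n => ((i : ℕ) + 1 : F) ^ (j : ℕ))) =
      (y m * t) • ∑ j : Fin k, (y j / y m) •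
        (t⁻¹ • (H j).map (algebraMap K F) + powDiagonal F n j) := by
    rw [Finset.smul_sum]
    refine Finset.sum_congr rfl fun j _ => ?_
    rw [smul_add, smul_add, smul_smul, smul_smul, smul_add, smul_smul, smul_smul]
    congr 2 <;> field_simp
  rw [hrescale, rank_smul_of_mem_nonZeroDivisors _
    (mem_nonZeroDivisors_of_ne_zero (mul_ne_zero hym ht₀))]
  exact hrank

/-- Lemma 9: for `t` transcendental over `K`, symmetric matrices `H_j` over `K` and
`D_j = diag(1^(j-1),…,n^(j-1))`, every nonzero combination
`∑_j y_j (H_j + t·D_j)` over an algebraically closed field `F ⊇ K(t)` has rank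
at least `n-k+1`. -/
theorem stmt7 {K F : Type*} [Field K] [CharZero K] [Field F] [Algebra K F] [IsAlgClosed F]
    {n k : ℕ} (hk : 1 ≤ k) (hkn : k ≤ n)
    (t : F) (ht : Transcendental K t)
    (H : Fin k → Matrix (Fin n) (Fin n) K) (hH : ∀ j, (H j).IsSymm)
    (y : Fin k → F) (hy : y ≠ 0) :
    n - k + 1 ≤
      (∑ j : Fin k, y j •
        ((H j).map (algebraMap K F) +
          t • Matrix.diagonal (fun i : Fin n => ((i : ℕ) + 1 : F) ^ (j : ℕ)))).rank :=
  stmt7_general hkn t ht H y hy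
end

section
/- Let f(T) ∈ F(ζ)[T] be monic, where ζ is an infinitesimal over a real closed field F, and let Z_f be the multiset of roots of f in the algebraic closure of F⟨ζ⟩. Let o(f) be the order (as a power of ζ) of the largest coefficient, and f̂(T) = lim_ζ ζ^{-o(f)} f(T). Then: (a) o(f) equals the sum over unbounded roots τ of f of μ(τ)·o(τ); (b) the zero set of f̂ in the algebraic closure of F equals lim_ζ of the set of bounded roots of f; and (c) for each root y of f̂, the multiplicity of y as a root of f̂ equals the sum of multiplicities μ(τ) over bounded roots τ of f with lim_ζ τ = y. -/
open Polynomial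

/-!
Write `ζ^q` for `pi q` and `o` for `v`. On the ring `O = {o ≥ 0}` of bounded elements, `lim` is a
ring homomorphism `O → K`. Factor the monic `f` over its roots and multiply each unbounded factor
`X - τ` by `ζ^{-o(τ)}`:
`ζ^{-o(f)} f = ∏_{bounded} (X - τ) · ∏_{unbounded} (ζ^{-o(τ)} X - ζ^{-o(τ)} τ)` is a product of
polynomials with coefficients in `O`. Taking `lim` coefficientwise, each unbounded factor becomes
the nonzero constant `-lim (ζ^{-o(τ)} τ)`, so `f̂ = c · ∏_{bounded} (X - lim τ)` with `c ≠ 0`.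
All three claims are read off this factorization; for (a), the coefficients of `ζ^{-o(f)} f` are
bounded and the one of index `deg f̂` has nonzero limit, hence order `0`.
-/

theorem Polynomial.coeff_sum_range_C_mul_X_pow {R : Type*} [Semiring R] {a : ℕ → R} {d : ℕ}
    (ha : ∀ n, d < n → a n = 0) (n : ℕ) :
    (∑ j ∈ Finset.range (d + 1), C (a j) * X ^ j).coeff n = a n := by
  simp only [finsetSum_coeff, coeff_C_mul_X_pow, Finset.sum_ite_eq, Finset.mem_range]
  split_ifs with hn
  · rfl
  · exact (ha n (by omega)).symm

theorem Polynomial.roots_C_mul_prod_X_sub_C {α R : Type*} [CommRing R] [IsDomain R] {c : R}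
    (hc : c ≠ 0) (g : α → R) (s : Multiset α) :
    (C c * (s.map fun a => X - C (g a)).prod).roots = s.map g := by
  rw [roots_C_mul _ hc, ← roots_multiset_prod_X_sub_C (s.map g), Multiset.map_map]
  rfl

section Reduction

variable {L K : Type*} [CommRing L] [CommRing K] {O : Subring L}

def ReducesTo (φ : O →+* K) (p : L[X]) (r : K[X]) : Prop :=
  ∃ q : O[X], q.map O.subtype = p ∧ q.map φ = r

variable {φ : O →+* K}

theorem ReducesTo.one : ReducesTo φ 1 1 :=
  ⟨1, Polynomial.map_one _, Polynomial.map_one _⟩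

theorem ReducesTo.mul {p₁ p₂ : L[X]} {r₁ r₂ : K[X]} (h₁ : ReducesTo φ p₁ r₁)
    (h₂ : ReducesTo φ p₂ r₂) : ReducesTo φ (p₁ * p₂) (r₁ * r₂) := by
  obtain ⟨q₁, rfl, rfl⟩ := h₁
  obtain ⟨q₂, rfl, rfl⟩ := h₂
  exact ⟨q₁ * q₂, Polynomial.map_mul _, Polynomial.map_mul _⟩

theorem ReducesTo.multiset_prod {ι : Type*} {s : Multiset ι} {p : ι → L[X]} {r : ι → K[X]}
    (h : ∀ i ∈ s, ReducesTo φ (p i) (r i)) : ReducesTo φ (s.map p).prod (s.map r).prod := by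
  induction s using Multiset.induction_on with
  | empty => exact ReducesTo.one
  | cons i s ih =>
    simp only [Multiset.map_cons, Multiset.prod_cons]
    exact (h i (Multiset.mem_cons_self i s)).mul (ih fun j hj => h j (Multiset.mem_cons_of_mem hj))

theorem ReducesTo.coeff_mem {p : L[X]} {r : K[X]} (h : ReducesTo φ p r) (n : ℕ) :
    p.coeff n ∈ O := by
  obtain ⟨q, rfl, -⟩ := h
  simp

theorem ReducesTo.coeff_eq {p : L[X]} {r : K[X]} (h : ReducesTo φ p r) (n : ℕ) :
    r.coeff n = φ ⟨p.coeff n, h.coeff_mem n⟩ := by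
  obtain ⟨q, rfl, rfl⟩ := h
  simp

theorem reducesTo_X_sub_C {τ : L} (hτ : τ ∈ O) :
    ReducesTo φ (X - C τ) (X - C (φ ⟨τ, hτ⟩)) :=
  ⟨X - C ⟨τ, hτ⟩, by simp, by simp⟩

theorem reducesTo_C_mul_X_sub_C {a τ : L} (ha : a ∈ O) (haτ : a * τ ∈ O) :
    ReducesTo φ (C a * (X - C τ)) (C (φ ⟨a, ha⟩) * X - C (φ ⟨a * τ, haτ⟩)) :=
  ⟨C ⟨a, ha⟩ * X - C ⟨a * τ, haτ⟩, by simp [mul_sub], by simp⟩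

end Reduction

section Puiseux

variable {L K : Type*} [Field L] [Field K]

structure IsOrderFunction (v : L → ℚ) : Prop where
  -- `v 0` is a junk value; fixing it to `0` makes `0` bounded.
  map_zero : v 0 = 0
  map_mul : ∀ x y : L, x ≠ 0 → y ≠ 0 → v (x * y) = v x + v y
  min_le_map_add : ∀ x y : L, x ≠ 0 → y ≠ 0 → x + y ≠ 0 → min (v x) (v y) ≤ v (x + y)

namespace IsOrderFunction

variable {v : L → ℚ}

theorem map_one (hv : IsOrderFunction v) : v 1 = 0 := by
  have h := hv.map_mul 1 1 one_ne_zero one_ne_zero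
  rw [one_mul] at h
  linarith

theorem map_neg (hv : IsOrderFunction v) (x : L) : v (-x) = v x := by
  rcases eq_or_ne x 0 with rfl | hx
  · rw [neg_zero]
  have h := hv.map_mul (-1) (-1) (by norm_num) (by norm_num)
  rw [neg_mul_neg, one_mul, hv.map_one] at h
  rw [← neg_one_mul, hv.map_mul _ _ (by norm_num) hx]
  linarith

theorem nonneg_add (hv : IsOrderFunction v) {x y : L} (hx : 0 ≤ v x) (hy : 0 ≤ v y) :
    0 ≤ v (x + y) := by
  rcases eq_or_ne x 0 with rfl | hx0
  · rwa [zero_add]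
  rcases eq_or_ne y 0 with rfl | hy0
  · rwa [add_zero]
  rcases eq_or_ne (x + y) 0 with hxy | hxy
  · rw [hxy, hv.map_zero]
  · exact (le_min hx hy).trans (hv.min_le_map_add x y hx0 hy0 hxy)

theorem nonneg_mul (hv : IsOrderFunction v) {x y : L} (hx : 0 ≤ v x) (hy : 0 ≤ v y) :
    0 ≤ v (x * y) := by
  rcases eq_or_ne x 0 with rfl | hx0
  · rwa [zero_mul]
  rcases eq_or_ne y 0 with rfl | hy0
  · rwa [mul_zero]
  rw [hv.map_mul x y hx0 hy0]
  exact add_nonneg hx hy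

def boundedSubring (hv : IsOrderFunction v) : Subring L where
  carrier := {x | 0 ≤ v x}
  zero_mem' := hv.map_zero.ge
  one_mem' := hv.map_one.ge
  add_mem' := hv.nonneg_add
  mul_mem' := hv.nonneg_mul
  neg_mem' {x} hx := by simpa [hv.map_neg] using hx

theorem mem_boundedSubring (hv : IsOrderFunction v) {x : L} :
    x ∈ hv.boundedSubring ↔ 0 ≤ v x :=
  Iff.rfl

end IsOrderFunction

structure IsMonomialMap (v : L → ℚ) (pi : ℚ → L) : Prop where
  ne_zero : ∀ q, pi q ≠ 0
  map_add : ∀ q r, pi (q + r) = pi q * pi r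
  order_eq : ∀ q, v (pi q) = q

namespace IsMonomialMap

variable {v : L → ℚ} {pi : ℚ → L}

theorem map_zero (hpi : IsMonomialMap v pi) : pi 0 = 1 :=
  (mul_left_cancel₀ (hpi.ne_zero 0) (by rw [← hpi.map_add, add_zero, mul_one])).symm

theorem map_multiset_sum (hpi : IsMonomialMap v pi) (s : Multiset ℚ) :
    pi s.sum = (s.map pi).prod := by
  induction s using Multiset.induction_on with
  | empty => exact hpi.map_zero
  | cons q s ih => rw [Multiset.sum_cons, hpi.map_add, ih, Multiset.map_cons, Multiset.prod_cons]

theorem order_mul (hpi : IsMonomialMap v pi) (hv : IsOrderFunction v) (q : ℚ) {x : L}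
    (hx : x ≠ 0) : v (pi q * x) = q + v x := by
  rw [hv.map_mul _ _ (hpi.ne_zero _) hx, hpi.order_eq]

theorem order_mul_self (hpi : IsMonomialMap v pi) (hv : IsOrderFunction v) {τ : L} (hτ : τ ≠ 0) :
    v (pi (-v τ) * τ) = 0 := by
  rw [hpi.order_mul hv _ hτ, neg_add_cancel]

end IsMonomialMap

structure IsStandardPart (v : L → ℚ) (lim : L → K) : Prop where
  map_zero : lim 0 = 0
  map_one : lim 1 = 1
  map_add : ∀ x y : L, 0 ≤ v x → 0 ≤ v y → lim (x + y) = lim x + lim y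
  map_mul : ∀ x y : L, 0 ≤ v x → 0 ≤ v y → lim (x * y) = lim x * lim y
  eq_zero_of_pos : ∀ x : L, x ≠ 0 → 0 < v x → lim x = 0
  ne_zero_of_eq_zero : ∀ x : L, x ≠ 0 → v x = 0 → lim x ≠ 0

variable {v : L → ℚ} {pi : ℚ → L} {lim : L → K}

theorem IsStandardPart.order_eq_zero (hlim : IsStandardPart v lim)
    {x : L} (hx : 0 ≤ v x) (hlimx : lim x ≠ 0) : v x = 0 := by
  refine hx.eq_or_lt.elim Eq.symm fun hpos => absurd (hlim.eq_zero_of_pos x ?_ hpos) hlimx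
  rintro rfl
  exact hlimx hlim.map_zero

def IsStandardPart.ringHom (hlim : IsStandardPart v lim)
    (hv : IsOrderFunction v) : hv.boundedSubring →+* K where
  toFun x := lim x
  map_one' := hlim.map_one
  map_mul' x y := hlim.map_mul x y x.2 y.2
  map_zero' := hlim.map_zero
  map_add' x y := hlim.map_add x y x.2 y.2

@[simp]
theorem IsStandardPart.ringHom_apply (hlim : IsStandardPart v lim) (hv : IsOrderFunction v)
    (x : hv.boundedSubring) : hlim.ringHom hv x = lim x := rfl

theorem reducesTo_X_sub_C_lim (hv : IsOrderFunction v) (hlim : IsStandardPart v lim) {τ : L}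
    (hτ : 0 ≤ v τ) : ReducesTo (hlim.ringHom hv) (X - C τ) (X - C (lim τ)) := by
  simpa using reducesTo_X_sub_C (φ := hlim.ringHom hv) (hv.mem_boundedSubring.2 hτ)

theorem reducesTo_monomial_mul_X_sub_C (hv : IsOrderFunction v) (hpi : IsMonomialMap v pi)
    (hlim : IsStandardPart v lim) {τ : L} (hτ : v τ < 0) :
    ReducesTo (hlim.ringHom hv) (C (pi (-v τ)) * (X - C τ)) (C (-lim (pi (-v τ) * τ))) := by
  have hτ0 : τ ≠ 0 := by rintro rfl; exact hτ.ne hv.map_zero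
  have hpos : 0 < v (pi (-v τ)) := by rw [hpi.order_eq]; linarith
  have h := reducesTo_C_mul_X_sub_C (φ := hlim.ringHom hv) (hv.mem_boundedSubring.2 hpos.le)
    (hv.mem_boundedSubring.2 (hpi.order_mul_self hv hτ0).ge)
  have hzero : lim (pi (-v τ)) = 0 := hlim.eq_zero_of_pos _ (hpi.ne_zero _) hpos
  simpa [hzero] using h

theorem Polynomial.Monic.exists_reducesTo_C_mul_prod (hv : IsOrderFunction v)
    (hpi : IsMonomialMap v pi) (hlim : IsStandardPart v lim) {f : L[X]} (hf : f.Monic)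
    (hfs : f.Splits) :
    ∃ c ≠ 0, ReducesTo (hlim.ringHom hv)
      (C (pi (-((f.roots.filter (v · < 0)).map v).sum)) * f)
      (C c * ((f.roots.filter (0 ≤ v ·)).map fun τ => X - C (lim τ)).prod) := by
  set N := f.roots.filter (v · < 0)
  set B := f.roots.filter (0 ≤ v ·)
  have hroots : f.roots = B + N := by
    rw [add_comm, ← Multiset.filter_add_not (v · < 0) f.roots]
    congr 1
    exact Multiset.filter_congr fun τ _ => not_lt
  have hfactor : C (pi (-(N.map v).sum)) * f
      = (B.map fun τ => X - C τ).prod * (N.map fun τ => C (pi (-v τ)) * (X - C τ)).prod := by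
    rw [Multiset.prod_map_mul, ← Multiset.sum_map_neg', hpi.map_multiset_sum, map_multiset_prod,
      hfs.eq_prod_roots_of_monic hf, hroots, Multiset.map_add, Multiset.prod_add]
    simp only [Multiset.map_map, Function.comp_def]
    ring
  have hN : ∀ τ ∈ N, τ ≠ 0 ∧ v τ < 0 := fun τ hτ =>
    have hlt := (Multiset.mem_filter.1 hτ).2
    ⟨by rintro rfl; exact hlt.ne hv.map_zero, hlt⟩
  refine ⟨(N.map fun τ => -lim (pi (-v τ) * τ)).prod, ?_, ?_⟩
  · refine Multiset.prod_ne_zero fun h0 => ?_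
    obtain ⟨τ, hτ, hzero⟩ := Multiset.mem_map.1 h0
    exact hlim.ne_zero_of_eq_zero _ (mul_ne_zero (hpi.ne_zero _) (hN τ hτ).1)
      (hpi.order_mul_self hv (hN τ hτ).1) (neg_eq_zero.1 hzero)
  rw [hfactor, mul_comm (C _) (Multiset.prod _), map_multiset_prod C, Multiset.map_map]
  exact (ReducesTo.multiset_prod fun τ hτ =>
    reducesTo_X_sub_C_lim hv hlim (Multiset.mem_filter.1 hτ).2).mul
    (ReducesTo.multiset_prod fun τ hτ =>
      reducesTo_monomial_mul_X_sub_C hv hpi hlim (hN τ hτ).2)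

theorem ReducesTo.coeff_eq_lim {hv : IsOrderFunction v} {hlim : IsStandardPart v lim}
    {p : L[X]} {r : K[X]} (h : ReducesTo (hlim.ringHom hv) p r) (n : ℕ) :
    r.coeff n = lim (p.coeff n) :=
  h.coeff_eq n

theorem ReducesTo.le_order_coeff {hv : IsOrderFunction v} {hlim : IsStandardPart v lim}
    (hpi : IsMonomialMap v pi) {q : ℚ} {f : L[X]} {r : K[X]}
    (h : ReducesTo (hlim.ringHom hv) (C (pi q) * f) r) {j : ℕ} (hj : f.coeff j ≠ 0) :
    -q ≤ v (f.coeff j) := by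
  have hmem := h.coeff_mem j
  rw [coeff_C_mul, hv.mem_boundedSubring, hpi.order_mul hv _ hj] at hmem
  linarith

theorem ReducesTo.exists_order_coeff_eq {hv : IsOrderFunction v} {hlim : IsStandardPart v lim}
    (hpi : IsMonomialMap v pi) {q : ℚ} {f : L[X]} {r : K[X]}
    (h : ReducesTo (hlim.ringHom hv) (C (pi q) * f) r) (hr : r ≠ 0) :
    ∃ j ≤ f.natDegree, f.coeff j ≠ 0 ∧ v (f.coeff j) = -q := by
  have hlimj : lim (pi q * f.coeff r.natDegree) ≠ 0 := by
    rw [← coeff_C_mul, ← h.coeff_eq_lim]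
    exact leadingCoeff_ne_zero.2 hr
  have hj : f.coeff r.natDegree ≠ 0 := fun h0 => hlimj (by rw [h0, mul_zero, hlim.map_zero])
  have hmem := h.coeff_mem r.natDegree
  rw [coeff_C_mul, hv.mem_boundedSubring] at hmem
  have horder := hlim.order_eq_zero hmem hlimj
  rw [hpi.order_mul hv _ hj] at horder
  exact ⟨r.natDegree, le_natDegree_of_ne_zero hj, hj, by linarith⟩

end Puiseux

theorem stmt10_general {L K : Type*} [Field L] [IsAlgClosed L] [Field K]
    [DecidableEq K]
    (v : L → ℚ) (hv0 : v 0 = 0)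
    (hvmul : ∀ x y : L, x ≠ 0 → y ≠ 0 → v (x * y) = v x + v y)
    (hvadd : ∀ x y : L, x ≠ 0 → y ≠ 0 → x + y ≠ 0 → min (v x) (v y) ≤ v (x + y))
    (pi : ℚ → L) (hpine : ∀ q, pi q ≠ 0) (hpiadd : ∀ q r, pi (q + r) = pi q * pi r)
    (hpiv : ∀ q, v (pi q) = q)
    (lim : L → K) (hlim0 : lim 0 = 0) (hlim1 : lim 1 = 1)
    (hlimadd : ∀ x y : L, 0 ≤ v x → 0 ≤ v y → lim (x + y) = lim x + lim y)
    (hlimmul : ∀ x y : L, 0 ≤ v x → 0 ≤ v y → lim (x * y) = lim x * lim y)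
    (hlimpos : ∀ x : L, x ≠ 0 → 0 < v x → lim x = 0)
    (hlimne : ∀ x : L, x ≠ 0 → v x = 0 → lim x ≠ 0)
    (f : Polynomial L) (hf : f.Monic) (d : ℕ) (hd : f.natDegree = d)
    (U : ℚ) (hU : U = ((f.roots.filter (fun τ => v τ < 0)).map v).sum)
    (fhat : Polynomial K)
    (hfhat : fhat = ∑ j ∈ Finset.range (d + 1),
        C (lim (pi (-U) * f.coeff j)) * X ^ j) :
    ((∀ j, f.coeff j ≠ 0 → U ≤ v (f.coeff j)) ∧
      (∃ j ≤ d, f.coeff j ≠ 0 ∧ v (f.coeff j) = U)) ∧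
    {y : K | fhat.eval y = 0} = lim '' {τ : L | τ ∈ f.roots ∧ 0 ≤ v τ} ∧
    (∀ y : K, fhat.rootMultiplicity y
        = Multiset.card ((f.roots.filter (fun τ => 0 ≤ v τ)).filter
            (fun τ => lim τ = y))) := by
  have hv : IsOrderFunction v := ⟨hv0, hvmul, hvadd⟩
  have hpi : IsMonomialMap v pi := ⟨hpine, hpiadd, hpiv⟩
  have hlim : IsStandardPart v lim := ⟨hlim0, hlim1, hlimadd, hlimmul, hlimpos, hlimne⟩
  obtain ⟨c, hc, hred⟩ := hf.exists_reducesTo_C_mul_prod hv hpi hlim (IsAlgClosed.splits f)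
  rw [← hU] at hred
  have hfhat_eq : fhat = C c * ((f.roots.filter (0 ≤ v ·)).map fun τ => X - C (lim τ)).prod := by
    ext n
    rw [hfhat, coeff_sum_range_C_mul_X_pow, hred.coeff_eq_lim, coeff_C_mul]
    intro n hn
    rw [coeff_eq_zero_of_natDegree_lt (hd ▸ hn), mul_zero, hlim0]
  have hfhat_ne : fhat ≠ 0 := by
    rw [hfhat_eq]
    exact mul_ne_zero (C_ne_zero.2 hc)
      (monic_multiset_prod_of_monic _ _ fun τ _ => monic_X_sub_C _).ne_zero
  have hroots : fhat.roots = (f.roots.filter (0 ≤ v ·)).map lim := by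
    rw [hfhat_eq, roots_C_mul_prod_X_sub_C hc]
  refine ⟨⟨fun j hj => ?_, ?_⟩, ?_, fun y => ?_⟩
  · simpa using hred.le_order_coeff hpi hj
  · rw [← hfhat_eq] at hred
    simpa [hd] using hred.exists_order_coeff_eq hpi hfhat_ne
  · ext y
    simp [← IsRoot.def, ← mem_roots hfhat_ne, hroots, and_assoc]
  · rw [← count_roots, hroots, Multiset.count_map]
    exact congrArg _ (Multiset.filter_congr fun _ _ => eq_comm)

/-- Lemma 3 (extension of [BPR03, Lemma 11.37]): abstract model of the algebraic
closure `L` of the Puiseux series field `F⟨ζ⟩`, with order function `v` (additive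
valuation, `v ζ = 1`, bounded ⟺ `v ≥ 0`), monomials `π q = ζ^q`, and standard-part
homomorphism `lim : {v ≥ 0} → K` (`K` the algebraic closure of `F`).
For monic `f` of degree `d` with `o(f) = U := ∑_{unbounded roots τ} μ(τ)·o(τ)` and
`f̂ = lim ζ^{-U} f`:
(a) `U` is the minimal order of a coefficient of `f`;
(b) the zero set of `f̂` equals `lim` of the set of bounded roots of `f`;
(c) the multiplicity of each root `y` of `f̂` equals the sum of the multiplicities
of the bounded roots `τ` of `f` with `lim τ = y`. -/
theorem stmt10 {L K : Type*} [Field L] [IsAlgClosed L] [Field K] [IsAlgClosed K]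
    [DecidableEq K]
    (v : L → ℚ) (hv0 : v 0 = 0)
    (hvmul : ∀ x y : L, x ≠ 0 → y ≠ 0 → v (x * y) = v x + v y)
    (hvadd : ∀ x y : L, x ≠ 0 → y ≠ 0 → x + y ≠ 0 → min (v x) (v y) ≤ v (x + y))
    (pi : ℚ → L) (hpine : ∀ q, pi q ≠ 0) (hpiadd : ∀ q r, pi (q + r) = pi q * pi r)
    (hpiv : ∀ q, v (pi q) = q)
    (lim : L → K) (hlim0 : lim 0 = 0) (hlim1 : lim 1 = 1)
    (hlimadd : ∀ x y : L, 0 ≤ v x → 0 ≤ v y → lim (x + y) = lim x + lim y)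
    (hlimmul : ∀ x y : L, 0 ≤ v x → 0 ≤ v y → lim (x * y) = lim x * lim y)
    (hlimpos : ∀ x : L, x ≠ 0 → 0 < v x → lim x = 0)
    (hlimne : ∀ x : L, x ≠ 0 → v x = 0 → lim x ≠ 0)
    (f : Polynomial L) (hf : f.Monic) (d : ℕ) (hd : f.natDegree = d)
    (U : ℚ) (hU : U = ((f.roots.filter (fun τ => v τ < 0)).map v).sum)
    (fhat : Polynomial K)
    (hfhat : fhat = ∑ j ∈ Finset.range (d + 1),
        C (lim (pi (-U) * f.coeff j)) * X ^ j) :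
    ((∀ j, f.coeff j ≠ 0 → U ≤ v (f.coeff j)) ∧
      (∃ j ≤ d, f.coeff j ≠ 0 ∧ v (f.coeff j) = U)) ∧
    {y : K | fhat.eval y = 0} = lim '' {τ : L | τ ∈ f.roots ∧ 0 ≤ v τ} ∧
    (∀ y : K, fhat.rootMultiplicity y
        = Multiset.card ((f.roots.filter (fun τ => 0 ≤ v τ)).filter
            (fun τ => lim τ = y))) :=
  stmt10_general v hv0 hvmul hvadd pi hpine hpiadd hpiv lim hlim0 hlim1 hlimadd hlimmul hlimpos
    hlimne f hf d hd U hU fhat hfhat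
end

section
/- Let f = ∏_{τ ∈ Σ}(T - τ) be a monic polynomial whose root multiset Σ lies in an algebraically closed valued field, with valuation (order) o(·), and let Υ ⊆ Σ be the sub-multiset of roots with negative order (unbounded roots). Then the coefficient of T^{d-|Υ|} in f has order exactly ∑_{τ∈Υ} o(τ), and every coefficient of f has order at least ∑_{τ∈Υ} o(τ). -/
open Polynomial

/-! Split the roots into the unbounded ones `U` (those with `1 < v τ`) and the bounded ones `B`,
so that `f = g * h` with `g = ∏_{τ ∈ U} (X - τ)` and `h = ∏_{τ ∈ B} (X - τ)`. All coefficients of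
`h` have valuation `≤ 1` and `h` is monic of degree `|B|`, while the constant term `±∏_{τ ∈ U} τ`
of `g` has valuation `∏_{τ ∈ U} v τ` and strictly dominates every other coefficient of `g`.
Hence in `f_{|B|} = ∑ g_i h_{|B|-i}` the term `g_0 h_{|B|} = g_0` strictly dominates all others,
so no cancellation can occur. -/

namespace Valuation

variable {R Γ : Type*} [CommRing R] [LinearOrderedCommGroupWithZero Γ] (v : Valuation R Γ)

theorem map_coeff_mul_le {p q : R[X]} {a b : Γ} (hp : ∀ i, v (p.coeff i) ≤ a)
    (hq : ∀ j, v (q.coeff j) ≤ b) (n : ℕ) : v ((p * q).coeff n) ≤ a * b := by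
  rw [coeff_mul]
  exact v.map_sum_le fun x _ => (v.map_mul _ _).trans_le (mul_le_mul' (hp _) (hq _))

theorem map_coeff_mul_eq_of_lt {p q : R[X]} {n : ℕ}
    (hp : ∀ i, 0 < i → v (p.coeff i) < v (p.coeff 0))
    (hq : ∀ j, v (q.coeff j) ≤ v (q.coeff n)) (hqn : v (q.coeff n) ≠ 0) :
    v ((p * q).coeff n) = v (p.coeff 0) * v (q.coeff n) := by
  rw [coeff_mul, v.map_sum_eq_of_lt (j := (0, n)) (by simp), v.map_mul]
  rintro ⟨i, j⟩ hij
  obtain ⟨hsum, hne⟩ : i + j = n ∧ ¬(i = 0 ∧ j = n) := by simpa using hij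
  rw [v.map_mul, v.map_mul]
  exact mul_lt_mul_of_lt_of_le_of_nonneg_of_pos (hp i (by omega)) (hq j) zero_le
    (zero_lt_iff.mpr hqn)

theorem map_coeff_zero_prod_X_sub_C (s : Multiset R) :
    v ((s.map fun τ => X - C τ).prod.coeff 0) = (s.map v).prod := by
  simp [coeff_zero_multiset_prod, Multiset.map_map, ← map_multiset_prod v]

theorem map_coeff_prod_X_sub_C_le_one {s : Multiset R} (hs : ∀ τ ∈ s, v τ ≤ 1) (n : ℕ) :
    v ((s.map fun τ => X - C τ).prod.coeff n) ≤ 1 := by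
  induction s using Multiset.induction generalizing n with
  | empty => by_cases hn : n = 0 <;> simp [coeff_one, hn]
  | cons a s ih =>
    have hXa : ∀ i, v ((X - C a).coeff i) ≤ 1 := fun i => by
      rcases i with _ | _ | i <;> simp [coeff_X, coeff_C, hs a (Multiset.mem_cons_self a s)]
    rw [Multiset.map_cons, Multiset.prod_cons, ← mul_one 1]
    exact v.map_coeff_mul_le hXa (ih fun τ hτ => hs τ (Multiset.mem_cons_of_mem hτ)) n

theorem one_le_prod_map {s : Multiset R} (hs : ∀ τ ∈ s, 1 < v τ) : 1 ≤ (s.map v).prod :=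
  Multiset.one_le_prod fun _ hg => by
    obtain ⟨τ, hτ, rfl⟩ := Multiset.mem_map.mp hg
    exact (hs τ hτ).le

theorem map_coeff_prod_X_sub_C_lt {s : Multiset R} (hs : ∀ τ ∈ s, 1 < v τ) {n : ℕ}
    (hn : 0 < n) : v ((s.map fun τ => X - C τ).prod.coeff n) < (s.map v).prod := by
  induction s using Multiset.induction generalizing n with
  | empty => simp [coeff_one, hn.ne']
  | cons a s ih =>
    have ha : 1 < v a := hs a (Multiset.mem_cons_self a s)
    have hs' : ∀ τ ∈ s, 1 < v τ := fun τ hτ => hs τ (Multiset.mem_cons_of_mem hτ)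
    set q := (s.map fun τ => X - C τ).prod
    set P := (s.map v).prod
    have hP : 0 < P := zero_lt_one.trans_le (v.one_le_prod_map hs')
    have hq : ∀ k, v (q.coeff k) ≤ P := fun k => by
      rcases k.eq_zero_or_pos with rfl | hk
      · exact (v.map_coeff_zero_prod_X_sub_C s).le
      · exact (ih hs' hk).le
    obtain ⟨k, rfl⟩ : ∃ k, n = k + 1 := ⟨n - 1, by omega⟩
    rw [Multiset.map_cons, Multiset.prod_cons, Multiset.map_cons, Multiset.prod_cons, mul_comm,
      coeff_mul_X_sub_C]
    refine (v.map_sub _ _).trans_lt (max_lt ?_ ?_)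
    · exact (hq k).trans_lt (lt_mul_of_one_lt_left hP ha)
    · rw [v.map_mul, mul_comm (v a)]
      exact mul_lt_mul_of_pos_right (ih hs' k.succ_pos) (zero_lt_one.trans ha)

theorem map_coeff_prod_X_sub_C_le {s : Multiset R} (hs : ∀ τ ∈ s, 1 < v τ) (n : ℕ) :
    v ((s.map fun τ => X - C τ).prod.coeff n) ≤ (s.map v).prod := by
  rcases n.eq_zero_or_pos with rfl | hn
  · exact (v.map_coeff_zero_prod_X_sub_C s).le
  · exact (v.map_coeff_prod_X_sub_C_lt hs hn).le

theorem map_coeff_prod_X_sub_C_add {U B : Multiset R} (hU : ∀ τ ∈ U, 1 < v τ)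
    (hB : ∀ τ ∈ B, v τ ≤ 1) :
    v (((U + B).map fun τ => X - C τ).prod.coeff (Multiset.card B)) = (U.map v).prod ∧
    ∀ i, v (((U + B).map fun τ => X - C τ).prod.coeff i) ≤ (U.map v).prod := by
  have hB_top : (B.map fun τ => X - C τ).prod.coeff (Multiset.card B) = 1 := by
    simp [Multiset.prod_X_sub_C_coeff, Multiset.esymm]
  have hB_le := v.map_coeff_prod_X_sub_C_le_one hB
  rw [Multiset.map_add, Multiset.prod_add]
  refine ⟨?_, fun i => ?_⟩
  · have hU_lt : ∀ i, 0 < i → v ((U.map fun τ => X - C τ).prod.coeff i) <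
        v ((U.map fun τ => X - C τ).prod.coeff 0) := fun i hi => by
      rw [v.map_coeff_zero_prod_X_sub_C]; exact v.map_coeff_prod_X_sub_C_lt hU hi
    rw [v.map_coeff_mul_eq_of_lt hU_lt, hB_top, v.map_one, mul_one, v.map_coeff_zero_prod_X_sub_C]
    · rw [hB_top, v.map_one]; exact hB_le
    · rw [hB_top, v.map_one]; exact one_ne_zero
  · rw [← mul_one (U.map v).prod]
    exact v.map_coeff_mul_le (v.map_coeff_prod_X_sub_C_le hU) hB_le i

end Valuation

theorem stmt11_general {L Γ : Type*} [Field L]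
    [LinearOrderedCommGroupWithZero Γ]
    (v : Valuation L Γ) (Sig : Multiset L) (f : Polynomial L)
    (hf : f = (Sig.map (fun τ => X - C τ)).prod)
    (d : ℕ) (hd : d = Multiset.card Sig)
    (Ups : Multiset L) (hUps : Ups = Sig.filter (fun τ => 1 < v τ)) :
    v (f.coeff (d - Multiset.card Ups)) = (Ups.map (fun τ => v τ)).prod ∧
    ∀ i : ℕ, v (f.coeff i) ≤ (Ups.map (fun τ => v τ)).prod := by
  have hsplit : Ups + Sig.filter (fun τ => ¬ 1 < v τ) = Sig := by
    rw [hUps, Multiset.filter_add_not]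
  have hcard : d - Multiset.card Ups = Multiset.card (Sig.filter fun τ => ¬ 1 < v τ) := by
    rw [hd, ← congrArg Multiset.card hsplit, Multiset.card_add, add_tsub_cancel_left]
  have key := v.map_coeff_prod_X_sub_C_add (U := Ups) (B := Sig.filter fun τ => ¬ 1 < v τ)
    (fun τ hτ => by rw [hUps] at hτ; exact (Multiset.mem_filter.mp hτ).2)
    (fun τ hτ => not_lt.mp (Multiset.mem_filter.mp hτ).2)
  rw [hsplit, ← hf, ← hcard] at key
  exact key

/-- For a monic polynomial `f = ∏_{τ∈Σ}(T-τ)` over an algebraically closed valued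
field, with `Υ ⊆ Σ` the sub-multiset of unbounded roots (valuation `> 1`, i.e.
negative order of vanishing), the coefficient of `T^(d-|Υ|)` has valuation exactly
`∏_{τ∈Υ} v(τ)` and every coefficient has valuation at most `∏_{τ∈Υ} v(τ)`. -/
theorem stmt11 {L Γ : Type*} [Field L] [IsAlgClosed L]
    [LinearOrderedCommGroupWithZero Γ]
    (v : Valuation L Γ) (Sig : Multiset L) (f : Polynomial L)
    (hf : f = (Sig.map (fun τ => X - C τ)).prod)
    (d : ℕ) (hd : d = Multiset.card Sig)
    (Ups : Multiset L) (hUps : Ups = Sig.filter (fun τ => 1 < v τ)) :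
    v (f.coeff (d - Multiset.card Ups)) = (Ups.map (fun τ => v τ)).prod ∧
    ∀ i : ℕ, v (f.coeff i) ≤ (Ups.map (fun τ => v τ)).prod :=
  stmt11_general v Sig f hf d hd Ups hUps
end

section
/- Let K be a real closed field, p ∈ K[Y] with p ≥ 0 everywhere, Q: Kⁿ → K^k a polynomial map, and suppose x ∈ Kⁿ satisfies p(Q(x)) = 0 and p(Q(X)) is not identically zero. Let ε₁ ≫ ε₂ > 0 be infinitesimals over K. If every ball around x contains a point y with p(Q(y)) > 0, then there exists x̃ ∈ K⟨ε₁,ε₂⟩ⁿ with p(Q(x̃)) = ε₁ and lim_{ε₁,ε₂} x̃ = x. Consequently Z(p(Q(X)), Kⁿ) ⊆ lim_{ε} Z(p(Q(X)) - ε₁, K⟨ε₁,ε₂⟩ⁿ) whenever every zero of p∘Q is in the closure of {p∘Q > 0}. -/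
/-!
As `p ≥ 0` and `p ∘ Q ≠ 0`, there is a point `z` with `(p ∘ Q)(z) > 0`. On the line through `x`
and `z`, `φ(t) = (p ∘ Q)(x + t (z - x))` is a nonnegative polynomial with `φ(0) = 0`, hence positive
on some interval `(0, u]`. Because `ε₁` lies below every positive element of `K`, the intermediate
value theorem in the real closed field `K'` gives a root of `φ = ε₁` below every positive `s ∈ K`;
the least positive root `τ` is therefore infinitesimal, and `x + τ (z - x)` has standard part `x`.
The intermediate value theorem itself reduces, by factoring, to irreducible polynomials, which
have degree at most two over a real closed field by the Galois-theoretic proof of the fundamental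
theorem of algebra.
-/

/-- A real closed ordered field: nonnegative elements are squares and every odd
degree polynomial has a root. -/
def IsRealClosedField (F : Type*) [Field F] [LinearOrder F] [IsStrictOrderedRing F] : Prop :=
  (∀ x : F, 0 ≤ x → ∃ y, y ^ 2 = x) ∧
    ∀ p : Polynomial F, Odd p.natDegree → ∃ x, p.eval x = 0

open Polynomial Module
open scoped IntermediateField

theorem finrank_ne_two_of_forall_isSquare {E M : Type*} [Field E] [Field M] [Algebra E M]
    [NeZero (2 : E)] (hsq : ∀ a : E, IsSquare a) : finrank E M ≠ 2 := by
  intro h2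
  have : FiniteDimensional E M := .of_finrank_pos (by omega)
  obtain ⟨α, hα⟩ : ∃ α : M, α ∉ (algebraMap E M).range := by
    by_contra! h
    have hbot : (⊥ : Subalgebra E M) = ⊤ := eq_top_iff.2 fun z _ => Algebra.mem_bot.2 (h z)
    have := Subalgebra.bot_eq_top_iff_finrank_eq_one.1 hbot
    omega
  have hint : IsIntegral E α := .of_finite E α
  have hdeg : (minpoly E α).natDegree = 2 := by
    have := minpoly.natDegree_le (A := E) α
    have := minpoly.natDegree_pos hint
    have : (minpoly E α).natDegree ≠ 1 := fun h => hα (minpoly.natDegree_eq_one_iff.1 h)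
    omega
  set A := algebraMap E M
  set b := (minpoly E α).coeff 1
  set c := (minpoly E α).coeff 0
  have hroot : α ^ 2 + A b * α + A c = 0 := by
    have hlead : (minpoly E α).coeff 2 = 1 := hdeg ▸ (minpoly.monic hint).coeff_natDegree
    have := minpoly.aeval E α
    rw [aeval_eq_sum_range, hdeg] at this
    simpa [Finset.sum_range_succ, hlead, Algebra.smul_def, add_comm, add_left_comm, mul_comm]
      using this
  -- completing the square: `(α + b/2)² = b²/4 - c` is a square in `E`
  obtain ⟨w, hw⟩ := hsq (b ^ 2 / 4 - c)
  have hfactor : (α + A (b / 2) - A w) * (α + A (b / 2) + A w) = 0 := by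
    have hb : 2 * A (b / 2) = A b := by
      rw [← map_ofNat A 2, ← map_mul, mul_div_cancel₀ _ two_ne_zero]
    have hw' : A w * A w = A (b / 2) ^ 2 - A c := by
      rw [← map_mul, ← map_pow, ← map_sub, ← hw, div_pow]
      norm_num
    linear_combination hroot + α * hb - hw'
  rcases mul_eq_zero.1 hfactor with h | h
  · exact hα ⟨w - b / 2, by rw [map_sub]; linear_combination -h⟩
  · exact hα ⟨-w - b / 2, by rw [map_sub, map_neg]; linear_combination -h⟩

section Galois

variable {F L : Type*} [Field F] [Field L] [Algebra F L] [FiniteDimensional F L] [IsGalois F L]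

/-- The fixed field of a Sylow 2-subgroup of the Galois group has odd degree. -/
theorem IsGalois.exists_finrank_eq_two_pow
    (hodd : ∀ M : IntermediateField F L, Odd (finrank F M) → finrank F M = 1) :
    ∃ v, finrank F L = 2 ^ v := by
  have : Fact (Nat.Prime 2) := ⟨Nat.prime_two⟩
  obtain ⟨P⟩ : Nonempty (Sylow 2 Gal(L/F)) := inferInstance
  set M := IntermediateField.fixedField (P : Subgroup Gal(L/F))
  have hML : finrank M L = 2 ^ (finrank F L).factorization 2 := by
    rw [IntermediateField.finrank_fixedField_eq_card, Sylow.card_eq_multiplicity,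
      IsGalois.card_aut_eq_finrank]
  have htower := finrank_mul_finrank F M L
  have hM : finrank F M = finrank F L / 2 ^ (finrank F L).factorization 2 :=
    (Nat.div_eq_of_eq_mul_left (by positivity) (by rw [← hML, htower])).symm
  have hM1 : finrank F M = 1 := by
    refine hodd M ?_
    rw [hM, Nat.odd_iff]
    have := Nat.not_dvd_ordCompl Nat.prime_two (finrank_pos (R := F) (M := L)).ne'
    omega
  exact ⟨_, by rw [← htower, hM1, one_mul, hML]⟩

theorem IsGalois.exists_intermediateField_finrank_eq_two {j : ℕ}
    (hj : finrank F L = 2 ^ (j + 1)) : ∃ N : IntermediateField F L, finrank F N = 2 := by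
  have : Fact (Nat.Prime 2) := ⟨Nat.prime_two⟩
  obtain ⟨S, hS⟩ := Sylow.exists_subgroup_card_pow_prime 2 (n := j) (G := Gal(L/F))
    (by rw [IsGalois.card_aut_eq_finrank, hj]; exact pow_dvd_pow 2 j.le_succ)
  refine ⟨IntermediateField.fixedField S, ?_⟩
  have htower := finrank_mul_finrank F (IntermediateField.fixedField S) L
  rw [IntermediateField.finrank_fixedField_eq_card, hS, hj, pow_succ'] at htower
  exact Nat.eq_of_mul_eq_mul_right (by positivity) htower

end Galois

section SqrtNegOne

variable {K A : Type*} [Field K] [Ring A] [Algebra K A] {i : A}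

theorem aeval_X_sq_add_one_of_sq_eq_neg_one (hi : i ^ 2 = -1) :
    aeval i (X ^ 2 + 1 : K[X]) = 0 := by
  simp [hi]

theorem isIntegral_of_sq_eq_neg_one (hi : i ^ 2 = -1) : IsIntegral K i :=
  ⟨X ^ 2 + 1, monic_X_pow_add_C 1 two_ne_zero,
    by simpa using aeval_X_sq_add_one_of_sq_eq_neg_one (K := K) hi⟩

theorem natDegree_minpoly_le_two_of_sq_eq_neg_one (hi : i ^ 2 = -1) :
    (minpoly K i).natDegree ≤ 2 :=
  (natDegree_le_of_dvd (minpoly.dvd K i (aeval_X_sq_add_one_of_sq_eq_neg_one hi))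
    (monic_X_pow_add_C 1 two_ne_zero).ne_zero).trans (by compute_degree!)

end SqrtNegOne

namespace Polynomial

variable {F : Type*} [Field F] [LinearOrder F] [IsStrictOrderedRing F]

theorem exists_isRoot_mem_Ioo_of_natDegree_eq_one {q : F[X]} (hq : q.natDegree = 1) {a b : F}
    (hab : a < b) (hsign : q.eval a * q.eval b < 0) : ∃ t ∈ Set.Ioo a b, q.IsRoot t := by
  set r := -q.coeff 0 / q.coeff 1
  have hc : q.coeff 1 ≠ 0 := by
    rw [← hq]; exact leadingCoeff_ne_zero.2 (ne_zero_of_natDegree_gt (n := 0) (by omega))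
  have heval : ∀ t, q.eval t = q.coeff 1 * (t - r) := fun t => by
    rw [eq_X_add_C_of_natDegree_le_one hq.le]
    simp only [eval_add, eval_mul, eval_C, eval_X, coeff_add, coeff_C_mul, coeff_X_one,
      coeff_C_succ, r]
    field_simp
    ring
  have hprod : (a - r) * (b - r) < 0 := by
    refine neg_of_mul_neg_right (a := q.coeff 1 ^ 2) ?_ (sq_nonneg _)
    calc q.coeff 1 ^ 2 * ((a - r) * (b - r)) = q.eval a * q.eval b := by rw [heval, heval]; ring
      _ < 0 := hsign
  refine ⟨r, ?_, by simp [IsRoot, heval]⟩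
  rcases mul_neg_iff.1 hprod with ⟨h₁, h₂⟩ | ⟨h₁, h₂⟩
  · linarith
  · exact ⟨by linarith, by linarith⟩

theorem leadingCoeff_mul_eval_pos_of_natDegree_eq_two (hsq : ∀ x : F, 0 ≤ x → ∃ y, y ^ 2 = x)
    {q : F[X]} (hq : q.natDegree = 2) (hroot : ∀ t, ¬ q.IsRoot t) (t : F) :
    0 < q.leadingCoeff * q.eval t := by
  have heval : ∀ t, q.eval t = q.coeff 2 * (t * t) + q.coeff 1 * t + q.coeff 0 := fun t => by
    rw [eval_eq_sum_range, hq]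
    simp only [Finset.sum_range_succ, Finset.sum_range_zero]
    ring
  have hdisc : discrim (q.coeff 2) (q.coeff 1) (q.coeff 0) < 0 := by
    by_contra! h
    obtain ⟨s, hs⟩ := hsq _ h
    have hc : q.coeff 2 ≠ 0 := by
      rw [← hq]; exact leadingCoeff_ne_zero.2 (ne_zero_of_natDegree_gt (n := 0) (by omega))
    obtain ⟨x, hx⟩ := exists_quadratic_eq_zero hc ⟨s, by rw [← hs, sq]⟩
    exact hroot x (by rw [IsRoot, heval, hx])
  rw [discrim] at hdisc
  rw [leadingCoeff, hq, heval]
  nlinarith [sq_nonneg (2 * q.coeff 2 * t + q.coeff 1)]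

theorem exists_pos_forall_eval_ne_zero {φ : F[X]} (hφ : φ ≠ 0) :
    ∃ u > 0, ∀ s, 0 < s → s ≤ u → φ.eval s ≠ 0 := by
  set R := insert 1 (φ.roots.toFinset.filter (0 < ·))
  have hR : ∀ r ∈ R, 0 < r := by simp +contextual [R]
  have hmin : 0 < R.min' (Finset.insert_nonempty _ _) := hR _ (Finset.min'_mem _ _)
  refine ⟨R.min' (Finset.insert_nonempty _ _) / 2, half_pos hmin, fun s hs hsu hroot => ?_⟩
  have hsR : s ∈ R := Finset.mem_insert_of_mem (by simp [hφ, hroot, hs])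
  linarith [R.min'_le s hsR]

end Polynomial

namespace IsRealClosedField

variable {F : Type*} [Field F] [LinearOrder F] [IsStrictOrderedRing F]

theorem exists_nonneg_sq_eq (hF : IsRealClosedField F) {x : F} (hx : 0 ≤ x) :
    ∃ y : F, 0 ≤ y ∧ y ^ 2 = x := by
  obtain ⟨y, hy⟩ := hF.1 x hx
  exact ⟨|y|, abs_nonneg y, by rwa [sq_abs]⟩

theorem finrank_eq_one_of_odd (hF : IsRealClosedField F) {M : Type*} [Field M] [Algebra F M]
    [FiniteDimensional F M] (hodd : Odd (finrank F M)) : finrank F M = 1 := by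
  obtain ⟨α, hα⟩ := Field.exists_primitive_element F M
  have hint : IsIntegral F α := .of_finite F α
  have hdeg : (minpoly F α).natDegree = finrank F M := by
    rw [← IntermediateField.adjoin.finrank hint, hα, IntermediateField.finrank_top']
  obtain ⟨r, hr⟩ := hF.2 (minpoly F α) (hdeg ▸ hodd)
  rw [← hdeg]
  exact natDegree_eq_of_degree_eq_some
    (degree_eq_one_of_irreducible_of_root (minpoly.irreducible hint) hr)

/-- Square roots of `a + b i`, from `c = √((r + a)/2)`, `d = ±√((r - a)/2)`, `r = √(a² + b²)`. -/
theorem exists_sq_eq_add_mul (hF : IsRealClosedField F) {R : Type*} [CommRing R] [Algebra F R]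
    {i : R} (hi : i ^ 2 = -1) (a b : F) :
    ∃ c d : F, (algebraMap F R c + algebraMap F R d * i) ^ 2 =
      algebraMap F R a + algebraMap F R b * i := by
  obtain ⟨r, hr0, hr⟩ := hF.exists_nonneg_sq_eq (show (0 : F) ≤ a ^ 2 + b ^ 2 by positivity)
  obtain ⟨hra₁, hra₂⟩ := abs_le_of_sq_le_sq' (a := a) (by nlinarith) hr0
  obtain ⟨c, hc0, hc⟩ := hF.exists_nonneg_sq_eq (show 0 ≤ (r + a) / 2 by linarith)
  obtain ⟨d, hd0, hd⟩ := hF.exists_nonneg_sq_eq (show 0 ≤ (r - a) / 2 by linarith)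
  have hcd : 2 * c * d = |b| := by
    have hsq : (2 * c * d) ^ 2 = |b| ^ 2 := by
      rw [sq_abs, mul_pow, mul_pow, hc, hd]; nlinarith
    exact (pow_left_inj₀ (by positivity) (abs_nonneg b) two_ne_zero).1 hsq
  obtain ⟨d', hd', hcd'⟩ : ∃ d' : F, d' ^ 2 = d ^ 2 ∧ 2 * c * d' = b := by
    rcases le_or_gt 0 b with hb | hb
    · exact ⟨d, rfl, by rw [hcd, abs_of_nonneg hb]⟩
    · exact ⟨-d, neg_sq d, by rw [mul_neg, hcd, abs_of_neg hb, neg_neg]⟩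
  refine ⟨c, d', ?_⟩
  have hre : c ^ 2 - d' ^ 2 = a := by rw [hd', hc, hd]; ring
  rw [← hre, ← hcd']
  simp only [map_sub, map_mul, map_pow, map_ofNat]
  linear_combination (algebraMap F R d') ^ 2 * hi

theorem isSquare_of_mem_adjoin_sqrt_neg_one (hF : IsRealClosedField F) {L : Type*} [Field L]
    [Algebra F L] {i : L} (hi : i ^ 2 = -1) (z : F⟮i⟯) : IsSquare z := by
  set pb := IntermediateField.adjoin.powerBasis (isIntegral_of_sq_eq_neg_one (K := F) hi)
  have hdim : pb.dim ≤ 2 := by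
    rw [IntermediateField.adjoin.powerBasis_dim]
    exact natDegree_minpoly_le_two_of_sq_eq_neg_one hi
  have hgen : pb.gen ^ 2 = -1 := Subtype.ext (by simp [pb, hi])
  obtain ⟨f, hfdeg, rfl⟩ := pb.exists_eq_aeval z
  obtain ⟨c, d, hcd⟩ := hF.exists_sq_eq_add_mul hgen (f.coeff 0) (f.coeff 1)
  refine ⟨_, .trans ?_ (hcd.symm.trans (sq _))⟩
  conv_lhs => rw [eq_X_add_C_of_natDegree_le_one (show f.natDegree ≤ 1 by omega)]
  simp only [map_add, map_mul, aeval_C, aeval_X]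
  ring

/-- The splitting field `L` of `q (X² + 1)` has 2-power degree over `F`; over `F(i)`, where every
element is a square, a proper 2-power extension would contain a quadratic one, so `L = F(i)`. -/
theorem natDegree_le_two_of_irreducible (hF : IsRealClosedField F) {q : F[X]}
    (hq : Irreducible q) : q.natDegree ≤ 2 := by
  set P : F[X] := q * (X ^ 2 + 1)
  set L := P.SplittingField
  have hX : (X ^ 2 + 1 : F[X]) ≠ 0 := (monic_X_pow_add_C 1 two_ne_zero).ne_zero
  have hP : P.map (algebraMap F L) ≠ 0 := Polynomial.map_ne_zero (mul_ne_zero hq.ne_zero hX)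
  have hsplits : Splits (P.map (algebraMap F L)) := SplittingField.splits P
  obtain ⟨i, hi⟩ : ∃ i : L, i ^ 2 = -1 := by
    obtain ⟨i, hi⟩ := (hsplits.of_dvd hP (Polynomial.map_dvd _ (dvd_mul_left _ _)))
      |>.exists_eval_eq_zero
        (by rw [degree_map, show (X ^ 2 + 1 : F[X]).degree = 2 by compute_degree!]; decide)
    exact ⟨i, by linear_combination (by simpa using hi : i ^ 2 + 1 = 0)⟩
  obtain ⟨α, hα⟩ := (hsplits.of_dvd hP (Polynomial.map_dvd _ (dvd_mul_right _ _)))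
    |>.exists_eval_eq_zero
      (by rw [degree_map]; exact fun h => hq.not_isUnit (isUnit_iff_degree_eq_zero.2 h))
  have : IsGalois F L := ⟨⟩
  obtain ⟨v, hv⟩ := IsGalois.exists_finrank_eq_two_pow (F := F) (L := L)
    fun M hM => hF.finrank_eq_one_of_odd hM
  have htower := finrank_mul_finrank F F⟮i⟯ L
  have hL : finrank F⟮i⟯ L = 1 := by
    obtain ⟨j, -, hj⟩ := (Nat.dvd_prime_pow Nat.prime_two).1 (hv ▸ Dvd.intro_left _ htower)
    cases j with
    | zero => exact hj
    | succ j =>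
      obtain ⟨N, hN⟩ := IsGalois.exists_intermediateField_finrank_eq_two hj
      exact (finrank_ne_two_of_forall_isSquare (hF.isSquare_of_mem_adjoin_sqrt_neg_one hi) hN).elim
  have hi2 : finrank F F⟮i⟯ ≤ 2 := by
    rw [IntermediateField.adjoin.finrank (isIntegral_of_sq_eq_neg_one (K := F) hi)]
    exact natDegree_minpoly_le_two_of_sq_eq_neg_one hi
  have hmin : minpoly F α = q * C q.leadingCoeff⁻¹ :=
    (minpoly.eq_of_irreducible hq (by rwa [eval_map_algebraMap] at hα)).symm
  calc q.natDegree = (minpoly F α).natDegree := by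
        rw [hmin, natDegree_mul_C (inv_ne_zero (leadingCoeff_ne_zero.2 hq.ne_zero))]
    _ ≤ finrank F L := minpoly.natDegree_le α
    _ ≤ 2 := by rw [← htower, hL, mul_one]; exact hi2

theorem exists_isRoot_mem_Ioo_of_irreducible (hF : IsRealClosedField F) {q : F[X]}
    (hq : Irreducible q) {a b : F} (hab : a < b) (hsign : q.eval a * q.eval b < 0) :
    ∃ t ∈ Set.Ioo a b, q.IsRoot t := by
  rcases (show q.natDegree = 1 ∨ q.natDegree = 2 by
    have := hq.natDegree_pos; have := hF.natDegree_le_two_of_irreducible hq; omega) with h | h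
  · exact exists_isRoot_mem_Ioo_of_natDegree_eq_one h hab hsign
  · have hroot : ∀ t, ¬ q.IsRoot t := fun t ht => by
      have := natDegree_eq_of_degree_eq_some (n := 1) (degree_eq_one_of_irreducible_of_root hq ht)
      omega
    have ha := leadingCoeff_mul_eval_pos_of_natDegree_eq_two hF.1 h hroot a
    have hb := leadingCoeff_mul_eval_pos_of_natDegree_eq_two hF.1 h hroot b
    nlinarith [mul_pos ha hb, sq_nonneg q.leadingCoeff]

theorem exists_isRoot_mem_Ioo (hF : IsRealClosedField F) (g : F[X]) {a b : F} (hab : a < b)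
    (hsign : g.eval a * g.eval b < 0) : ∃ t ∈ Set.Ioo a b, g.IsRoot t := by
  induction g using WfDvdMonoid.induction_on_irreducible with
  | zero => simp at hsign
  | unit u hu =>
    obtain ⟨c, -, rfl⟩ := isUnit_iff.1 hu
    simp only [eval_C] at hsign
    nlinarith [mul_self_nonneg c]
  | mul g q _ hq ih =>
    have hsign' : (q.eval a * q.eval b) * (g.eval a * g.eval b) < 0 := by
      simpa only [eval_mul, mul_mul_mul_comm] using hsign
    rcases mul_neg_iff.1 hsign' with ⟨-, hg⟩ | ⟨hq', -⟩
    · obtain ⟨t, ht, hroot⟩ := ih hg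
      exact ⟨t, ht, root_mul.2 (.inr hroot)⟩
    · obtain ⟨t, ht, hroot⟩ := hF.exists_isRoot_mem_Ioo_of_irreducible hq hab hq'
      exact ⟨t, ht, root_mul.2 (.inl hroot)⟩

end IsRealClosedField

namespace MvPolynomial

variable {σ R S : Type*} [CommRing R] [CommRing S]

noncomputable def restrictLine (P : MvPolynomial σ R) (x v : σ → R) : R[X] :=
  eval₂ Polynomial.C (fun i => Polynomial.C (x i) + Polynomial.C (v i) * Polynomial.X) P

theorem eval_map_restrictLine (P : MvPolynomial σ R) (x v : σ → R) (f : R →+* S) (t : S) :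
    ((P.restrictLine x v).map f).eval t = eval (fun i => f (x i) + f (v i) * t) (P.map f) := by
  rw [eval_map, Polynomial.eval_map, restrictLine, ← Polynomial.coe_eval₂RingHom,
    eval₂_comp_left]
  congr 1
  · ext r; simp
  · funext i; simp

theorem eval_restrictLine (P : MvPolynomial σ R) (x v : σ → R) (t : R) :
    (P.restrictLine x v).eval t = eval (fun i => x i + v i * t) P := by
  simpa using P.eval_map_restrictLine x v (RingHom.id R) t

end MvPolynomial

section Infinitesimal

variable {K K' : Type*} [Field K] [LinearOrder K] [IsStrictOrderedRing K]
  [Field K'] [LinearOrder K'] [IsStrictOrderedRing K'] {ι : K →+* K'}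

def IsInfinitesimal (ι : K →+* K') (τ : K') : Prop := ∀ δ : K, 0 < δ → |τ| < ι δ

theorem StrictMono.abs_map (hι : StrictMono ι) (a : K) : |ι a| = ι |a| := by
  simp only [abs_eq_max_neg, hι.monotone.map_max, map_neg]

theorem IsInfinitesimal.const_mul (hι : StrictMono ι) {τ : K'} (hτ : IsInfinitesimal ι τ)
    (c : K) : IsInfinitesimal ι (ι c * τ) := fun δ hδ => by
  have hc : 0 < |c| + 1 := by positivity
  calc |ι c * τ| = ι |c| * |τ| := by rw [abs_mul, hι.abs_map]
    _ ≤ ι (|c| + 1) * |τ| := by gcongr; exact hι.monotone (by linarith)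
    _ < ι (|c| + 1) * ι (δ / (|c| + 1)) :=
        mul_lt_mul_of_pos_left (hτ _ (div_pos hδ hc)) (by simpa using hι hc)
    _ = ι δ := by rw [← map_mul, mul_div_cancel₀ _ hc.ne']

theorem IsInfinitesimal.abs_le_of_sub (hι : StrictMono ι) {w : K'} {a : K}
    (h : IsInfinitesimal ι (w - ι a)) : |w| ≤ ι (|a| + 1) := by
  calc |w| ≤ |ι a| + |w - ι a| := by simpa using abs_add_le (ι a) (w - ι a)
    _ ≤ ι |a| + ι 1 := by rw [hι.abs_map]; gcongr; exact (h 1 one_pos).le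
    _ = ι (|a| + 1) := (map_add ι _ _).symm

theorem IsInfinitesimal.st_eq_of_sub (hι : StrictMono ι) {st : K' → K}
    (hst : ∀ z : K', (∃ b : K, |z| ≤ ι b) → ∀ δ : K, 0 < δ → |z - ι (st z)| < ι δ)
    {w : K'} {a : K} (h : IsInfinitesimal ι (w - ι a)) : st w = a := by
  by_contra hne
  set d := |st w - a|
  have hd : 0 < d / 2 := half_pos (abs_pos.2 (sub_ne_zero.2 hne))
  have := calc ι d = |ι (st w - a)| := (hι.abs_map _).symm
    _ = |(w - ι a) - (w - ι (st w))| := by rw [map_sub]; congr 1; ring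
    _ ≤ |w - ι a| + |w - ι (st w)| := abs_sub _ _
    _ < ι (d / 2) + ι (d / 2) := add_lt_add (h _ hd) (hst w ⟨_, h.abs_le_of_sub hι⟩ _ hd)
    _ = ι d := by rw [← map_add, add_halves]
  exact this.false

/-- The least positive root of `φ^ι - ε` is infinitesimal: below every standard `s > 0` the
intermediate value theorem in `K'` yields a root, since `φ^ι(0) = 0 < ε < φ(s)`. -/
theorem IsRealClosedField.exists_pos_isInfinitesimal_eval_map_eq (hK' : IsRealClosedField K')
    (hι : StrictMono ι) {φ : K[X]} (hφ0 : φ.eval 0 = 0) {u : K} (hu : 0 < u)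
    (hφpos : ∀ s, 0 < s → s ≤ u → 0 < φ.eval s) {ε : K'} (hε : 0 < ε)
    (hεinf : IsInfinitesimal ι ε) : ∃ τ, 0 < τ ∧ IsInfinitesimal ι τ ∧ (φ.map ι).eval τ = ε := by
  set g := φ.map ι - C ε
  have hg0 : g.eval 0 = -ε := by
    simp [g, eval_map, eval₂_at_zero, coeff_zero_eq_eval_zero, hφ0]
  have hg : g ≠ 0 := fun h => by rw [h, eval_zero] at hg0; linarith
  set T := g.roots.toFinset.filter (0 < ·)
  have hT : ∀ δ : K, 0 < δ → ∃ τ ∈ T, τ < ι δ := by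
    intro δ hδ
    have hs : 0 < min δ u := lt_min hδ hu
    have hgs : 0 < g.eval (ι (min δ u)) := by
      have := hεinf _ (hφpos _ hs (min_le_right _ _))
      rw [abs_of_pos hε] at this
      simpa [g, eval_map, eval₂_at_apply] using this
    obtain ⟨τ, hτ, hroot⟩ := hK'.exists_isRoot_mem_Ioo g (by simpa using hι hs)
      (by rw [hg0]; nlinarith)
    exact ⟨τ, by simp [T, hg, hroot.eq_zero, hτ.1],
      hτ.2.trans_le (hι.monotone (min_le_left _ _))⟩
  obtain ⟨τ₀, hτ₀T, -⟩ := hT 1 one_pos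
  have hTne : T.Nonempty := ⟨_, hτ₀T⟩
  have hmem := Finset.mem_filter.1 (T.min'_mem hTne)
  refine ⟨T.min' hTne, hmem.2, fun δ hδ => ?_, ?_⟩
  · obtain ⟨τ, hτT, hτδ⟩ := hT δ hδ
    rw [abs_of_pos hmem.2]
    exact (T.min'_le τ hτT).trans_lt hτδ
  · have := (mem_roots hg).1 (Multiset.mem_toFinset.1 hmem.1)
    simpa [g, sub_eq_zero] using this

end Infinitesimal

theorem stmt16_general {K K' : Type*} [Field K] [LinearOrder K] [IsStrictOrderedRing K]
    [Field K'] [LinearOrder K'] [IsStrictOrderedRing K']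
    (hK' : IsRealClosedField K')
    (ι : K →+* K') (hι : StrictMono ι)
    (ε₁ : K')
    (hε₁inf : 0 < ε₁ ∧ ∀ a : K, 0 < a → ε₁ < ι a)
    (st : K' → K)
    (hst2 : ∀ z : K', (∃ b : K, |z| ≤ ι b) → ∀ δ : K, 0 < δ → |z - ι (st z)| < ι δ)
    {n k : ℕ}
    (p : MvPolynomial (Fin k) K) (Q : Fin k → MvPolynomial (Fin n) K)
    (hp : ∀ y : Fin k → K, 0 ≤ MvPolynomial.eval y p)
    (pq : MvPolynomial (Fin n) K) (hpq : pq = MvPolynomial.bind₁ Q p)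
    (hne : pq ≠ 0)
    (x : Fin n → K) (hx : MvPolynomial.eval x pq = 0) :
    ∃ xt : Fin n → K',
      MvPolynomial.eval xt (MvPolynomial.map ι pq) = ε₁ ∧
      ∀ i, (∃ b : K, |xt i| ≤ ι b) ∧ st (xt i) = x i := by
  have hpq_nonneg : ∀ y, 0 ≤ MvPolynomial.eval y pq := fun y => by
    rw [hpq, MvPolynomial.eval, MvPolynomial.eval₂Hom_bind₁]
    exact hp _
  obtain ⟨z, hz⟩ : ∃ z, MvPolynomial.eval z pq ≠ 0 := by
    by_contra! h
    exact hne (MvPolynomial.funext fun y => by simp [h y])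
  set φ := pq.restrictLine x (z - x)
  have hφ0 : φ.eval 0 = 0 := by simpa [φ, MvPolynomial.eval_restrictLine] using hx
  have hφ1 : φ.eval 1 ≠ 0 := by simpa [φ, MvPolynomial.eval_restrictLine] using hz
  have hφ_nonneg : ∀ t, 0 ≤ φ.eval t := fun t => by
    simpa only [φ, MvPolynomial.eval_restrictLine] using hpq_nonneg _
  obtain ⟨u, hu, hφne⟩ := exists_pos_forall_eval_ne_zero (φ := φ) (by rintro h; simp [h] at hφ1)
  have hε₁ : IsInfinitesimal ι ε₁ := fun δ hδ => (abs_of_pos hε₁inf.1).trans_lt (hε₁inf.2 δ hδ)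
  obtain ⟨τ, -, hτ, hφτ⟩ := hK'.exists_pos_isInfinitesimal_eval_map_eq hι hφ0 hu
    (fun s hs hsu => (hφ_nonneg s).lt_of_ne' (hφne s hs hsu)) hε₁inf.1 hε₁
  refine ⟨fun i => ι (x i) + ι ((z - x) i) * τ, by rwa [← MvPolynomial.eval_map_restrictLine], ?_⟩
  intro i
  have hi : IsInfinitesimal ι (ι (x i) + ι ((z - x) i) * τ - ι (x i)) := by
    simpa using hτ.const_mul hι ((z - x) i)
  exact ⟨⟨_, hi.abs_le_of_sub hι⟩, hi.st_eq_of_sub hι hst2⟩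

/-- Final lemma of Section 5: let `K` be real closed, `p ≥ 0` everywhere,
`Q : Kⁿ → K^k` polynomial, `p(Q(X))` not identically zero, and `x` a zero of
`p∘Q` such that every ball around `x` contains a point `y` with `p(Q(y)) > 0`.
With `ε₁ ≫ ε₂ > 0` infinitesimals over `K` (in a real closed extension `K'`
with order embedding `ι` and standard part `st`), there exists
`x̃ ∈ K⟨ε₁,ε₂⟩ⁿ` with `p(Q(x̃)) = ε₁`, each coordinate bounded over `K`, and
`lim_ε x̃ = x`. -/
theorem stmt16 {K K' : Type*} [Field K] [LinearOrder K] [IsStrictOrderedRing K]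
    [Field K'] [LinearOrder K'] [IsStrictOrderedRing K']
    (hK : IsRealClosedField K) (hK' : IsRealClosedField K')
    (ι : K →+* K') (hι : StrictMono ι)
    (ε₁ ε₂ : K') (hε₂ : 0 < ε₂) (hε₂₁ : ∀ m : ℕ, 0 < m → ε₂ < ε₁ ^ m)
    (hε₁inf : 0 < ε₁ ∧ ∀ a : K, 0 < a → ε₁ < ι a)
    (st : K' → K) (hst1 : ∀ a : K, st (ι a) = a)
    (hst2 : ∀ z : K', (∃ b : K, |z| ≤ ι b) → ∀ δ : K, 0 < δ → |z - ι (st z)| < ι δ)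
    {n k : ℕ}
    (p : MvPolynomial (Fin k) K) (Q : Fin k → MvPolynomial (Fin n) K)
    (hp : ∀ y : Fin k → K, 0 ≤ MvPolynomial.eval y p)
    (pq : MvPolynomial (Fin n) K) (hpq : pq = MvPolynomial.bind₁ Q p)
    (hne : pq ≠ 0)
    (x : Fin n → K) (hx : MvPolynomial.eval x pq = 0)
    (happrox : ∀ δ : K, 0 < δ →
      ∃ y : Fin n → K, (∀ i, |y i - x i| < δ) ∧ 0 < MvPolynomial.eval y pq) :
    ∃ xt : Fin n → K',
      MvPolynomial.eval xt (MvPolynomial.map ι pq) = ε₁ ∧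
      ∀ i, (∃ b : K, |xt i| ≤ ι b) ∧ st (xt i) = x i :=
  stmt16_general hK' ι hι ε₁ hε₁inf st hst2 p Q hp pq hpq hne x hx
end

section
/- Let A be a finite-dimensional commutative algebra over an algebraically closed field of characteristic zero, presented as K[X₁,…,X_q]/(I) for a zero-dimensional ideal I with zero set Z̄ (points x with multiplicities μ(x)). Then for any f ∈ A and j ≥ 0, the trace of the multiplication-by-f^j operator on A equals ∑_{x ∈ Z̄} μ(x) f(x)^j. -/
/-! `A = K[X]/I` is finite-dimensional, hence Artinian, hence the product of its localizations
`A_𝔪` at its finitely many maximal ideals, so the trace of multiplication by `f ^ j` is the sum of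
the traces on the factors. Since `K` is algebraically closed, every maximal ideal is the kernel of
a unique `K`-algebra map `φ : A → K`, and these maps are exactly the evaluations at the zeros of
`I`. In `A_𝔪` the element `f - φ f` lies in the maximal ideal, which is nilpotent, so
multiplication by `f ^ j` is `(φ f) ^ j` plus a nilpotent map and has trace `μ(x) * (φ f) ^ j`. -/

set_option synthInstance.maxHeartbeats 1000000

/-- The evaluation homomorphism `K[X₁,…,X_q]/I → K` at a common zero `x` of `I`. -/
noncomputable def evalQuot {K : Type*} [Field K] {q : ℕ}
    (I : Ideal (MvPolynomial (Fin q) K)) (x : Fin q → K)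
    (hx : x ∈ {x : Fin q → K | ∀ p ∈ I, MvPolynomial.eval x p = 0}) :
    (MvPolynomial (Fin q) K ⧸ I) →+* K :=
  Ideal.Quotient.lift I (MvPolynomial.eval x) hx

/-- The multiplicity of a common zero `x` of a zero-dimensional ideal `I`: the
`K`-dimension of the local component, i.e. of the localization of `K[X]/I`
at the maximal ideal corresponding to `x`. -/
noncomputable def localMultiplicity {K : Type*} [Field K] {q : ℕ}
    (I : Ideal (MvPolynomial (Fin q) K)) (x : Fin q → K)
    (hx : x ∈ {x : Fin q → K | ∀ p ∈ I, MvPolynomial.eval x p = 0}) : ℕ :=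
  letI prime : (RingHom.ker (evalQuot I x hx)).IsPrime :=
    RingHom.ker_isPrime (evalQuot I x hx)
  letI : Algebra K (Localization.AtPrime (RingHom.ker (evalQuot I x hx))) :=
    ((algebraMap (MvPolynomial (Fin q) K ⧸ I)
        (Localization.AtPrime (RingHom.ker (evalQuot I x hx)))).comp
      (algebraMap K (MvPolynomial (Fin q) K ⧸ I))).toAlgebra
  Module.finrank K (Localization.AtPrime (RingHom.ker (evalQuot I x hx)))

open LinearMap MvPolynomial

theorem LinearMap.trace_piMap {R ι : Type*} [CommRing R] [Fintype ι]
    {M : ι → Type*} [∀ i, AddCommGroup (M i)] [∀ i, Module R (M i)] [∀ i, Module.Free R (M i)]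
    [∀ i, Module.Finite R (M i)] (f : ∀ i, Module.End R (M i)) :
    trace R (∀ i, M i) (piMap f) = ∑ i, trace R (M i) (f i) := by
  classical
  let b i := Module.Free.chooseBasis R (M i)
  rw [trace_eq_matrix_trace R (Pi.basis b), Matrix.trace, Fintype.sum_sigma]
  refine Finset.sum_congr rfl fun i _ => ?_
  rw [trace_eq_matrix_trace R (b i), Matrix.trace]
  refine Finset.sum_congr rfl fun a _ => ?_
  simp [toMatrix_apply]

theorem trace_mulLeft_eq_finrank_mul_of_isNilpotent_sub {R B : Type*} [CommRing R] [IsReduced R]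
    [Ring B] [Algebra R B] [Module.Free R B] [Module.Finite R B] {b : B} {c : R}
    (h : IsNilpotent (b - algebraMap R B c)) :
    trace R B (mulLeft R b) = Module.finrank R B * c := by
  have hnil : IsNilpotent (mulLeft R (b - algebraMap R B c)) := by
    obtain ⟨n, hn⟩ := h
    exact ⟨n, by rw [pow_mulLeft, hn, mulLeft_zero_eq_zero]⟩
  have hsplit : mulLeft R b = c • (1 : Module.End R B) + mulLeft R (b - algebraMap R B c) := by
    ext x
    simp [Algebra.smul_def, sub_mul]
  rw [hsplit, map_add, map_smul, trace_one, (isNilpotent_trace_of_isNilpotent hnil).eq_zero,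
    smul_eq_mul, mul_comm, add_zero]

namespace AlgHom

variable {R A : Type*} [CommRing R] [Ring A] [Algebra R A]

instance isPrime_ker [IsDomain R] (φ : A →ₐ[R] R) : (RingHom.ker φ).IsPrime :=
  RingHom.ker_isPrime φ

theorem sub_algebraMap_mem_ker (φ : A →ₐ[R] R) (a : A) :
    a - algebraMap R A (φ a) ∈ RingHom.ker φ := by
  simp [RingHom.mem_ker]

end AlgHom

section FiniteDimensional

variable {K A : Type*} [Field K] [CommRing A] [Algebra K A] [FiniteDimensional K A]

instance Localization.AtPrime.finite_of_finiteDimensional (m : Ideal A) [m.IsPrime] :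
    Module.Finite K (Localization.AtPrime m) :=
  have := IsArtinianRing.of_finite K A
  Module.Finite.of_surjective (Algebra.linearMap A (Localization.AtPrime m) |>.restrictScalars K)
    (IsArtinianRing.localization_surjective m.primeCompl _)

theorem trace_mulLeft_eq_sum_maximalSpectrum [Fintype (MaximalSpectrum A)] (a : A) :
    trace K A (mulLeft K a) = ∑ m : MaximalSpectrum A,
      trace K (Localization.AtPrime m.asIdeal) (mulLeft K (algebraMap A _ a)) := by
  have := IsArtinianRing.of_finite K A
  let e := ((MaximalSpectrum.toPiLocalizationEquiv A).restrictScalars K).toLinearEquiv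
  have hconj : e.conj (mulLeft K a) = piMap fun m => mulLeft K (algebraMap A _ a) := by
    refine LinearMap.ext fun x => funext fun m => ?_
    change MaximalSpectrum.toPiLocalizationEquiv A
      (a * (MaximalSpectrum.toPiLocalizationEquiv A).symm x) m = _
    rw [map_mul, AlgEquiv.apply_symm_apply]
    rfl
  rw [← trace_piMap, ← hconj, trace_conj']

theorem trace_mulLeft_localization_ker (φ : A →ₐ[K] K) (a : A) :
    trace K (Localization.AtPrime (RingHom.ker φ)) (mulLeft K (algebraMap A _ a)) =
      Module.finrank K (Localization.AtPrime (RingHom.ker φ)) * φ a := by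
  have := IsArtinianRing.of_finite K A
  apply trace_mulLeft_eq_finrank_mul_of_isNilpotent_sub
  rw [IsScalarTower.algebraMap_apply K A, ← map_sub, ← mem_nilradical,
    Ring.KrullDimLE.nilradical_eq_maximalIdeal,
    IsLocalization.AtPrime.to_map_mem_maximal_iff _ (RingHom.ker φ)]
  exact φ.sub_algebraMap_mem_ker a

theorem bijective_mk_ker_algHom [IsAlgClosed K] :
    Function.Bijective fun φ : A →ₐ[K] K =>
      (⟨RingHom.ker φ, RingHom.ker_isMaximal_of_surjective φ
        fun c => ⟨algebraMap K A c, φ.commutes c⟩⟩ : MaximalSpectrum A) := by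
  constructor
  · intro φ ψ h
    ext a
    have := (MaximalSpectrum.mk.inj h) ▸ φ.sub_algebraMap_mem_ker a
    rw [RingHom.mem_ker, map_sub, AlgHom.commutes, Algebra.algebraMap_self_apply,
      sub_eq_zero] at this
    exact this.symm
  · rintro ⟨m, hm⟩
    have hbij := IsAlgClosed.algebraMap_bijective_of_isIntegral (k := K) (K := A ⧸ m)
    let e := AlgEquiv.ofBijective (Algebra.ofId K (A ⧸ m)) hbij
    refine ⟨(e.symm : (A ⧸ m) →ₐ[K] K).comp (Ideal.Quotient.mkₐ K m), ?_⟩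
    ext a
    simp [RingHom.mem_ker, Ideal.Quotient.eq_zero_iff_mem]

theorem trace_mulLeft_eq_sum_algHom [IsAlgClosed K] [Fintype (A →ₐ[K] K)] (a : A) :
    trace K A (mulLeft K a) = ∑ φ : A →ₐ[K] K,
      Module.finrank K (Localization.AtPrime (RingHom.ker φ)) * φ a := by
  have := IsArtinianRing.of_finite K A
  have := Fintype.ofFinite (MaximalSpectrum A)
  rw [trace_mulLeft_eq_sum_maximalSpectrum,
    ← Fintype.sum_bijective _ (bijective_mk_ker_algHom (K := K)) _ _ fun _ => rfl]
  exact Finset.sum_congr rfl fun φ _ => trace_mulLeft_localization_ker φ a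

end FiniteDimensional

section ZeroSet

variable {K : Type*} [Field K] {q : ℕ} (I : Ideal (MvPolynomial (Fin q) K))

noncomputable def evalQuotAlgHom (x : Fin q → K)
    (hx : x ∈ {x : Fin q → K | ∀ p ∈ I, MvPolynomial.eval x p = 0}) :
    (MvPolynomial (Fin q) K ⧸ I) →ₐ[K] K :=
  { evalQuot I x hx with commutes' := eval_C }

theorem algHom_comp_mkₐ_eq_aeval (φ : (MvPolynomial (Fin q) K ⧸ I) →ₐ[K] K) :
    φ.comp (Ideal.Quotient.mkₐ K I) = aeval fun i => φ (Ideal.Quotient.mk I (X i)) :=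
  algHom_ext fun i => by simp

noncomputable def zeroSetEquivAlgHom :
    {x : Fin q → K // x ∈ {x : Fin q → K | ∀ p ∈ I, MvPolynomial.eval x p = 0}} ≃
      ((MvPolynomial (Fin q) K ⧸ I) →ₐ[K] K) where
  toFun x := evalQuotAlgHom I x.1 x.2
  invFun φ := ⟨fun i => φ (Ideal.Quotient.mk I (X i)), fun p hp => by
    rw [← coe_aeval_eq_eval, ← algHom_comp_mkₐ_eq_aeval]
    simp [Ideal.Quotient.eq_zero_iff_mem.mpr hp]⟩
  left_inv x := by
    ext i
    exact eval_X i
  right_inv φ := by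
    refine Ideal.Quotient.algHom_ext K <| algHom_ext fun i => ?_
    simp [evalQuotAlgHom, evalQuot]

theorem localMultiplicity_eq_finrank (x : Fin q → K)
    (hx : x ∈ {x : Fin q → K | ∀ p ∈ I, MvPolynomial.eval x p = 0}) :
    localMultiplicity I x hx =
      Module.finrank K (Localization.AtPrime (RingHom.ker (evalQuotAlgHom I x hx))) :=
  rfl

end ZeroSet

theorem stmt17_general {K : Type*} [Field K] [IsAlgClosed K] {q : ℕ}
    (I : Ideal (MvPolynomial (Fin q) K))
    [FiniteDimensional K (MvPolynomial (Fin q) K ⧸ I)]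
    (hfin : {x : Fin q → K | ∀ p ∈ I, MvPolynomial.eval x p = 0}.Finite)
    (f : MvPolynomial (Fin q) K ⧸ I) (j : ℕ) :
    LinearMap.trace K (MvPolynomial (Fin q) K ⧸ I) (LinearMap.mulLeft K (f ^ j)) =
      ∑ x ∈ hfin.toFinset.attach,
        (localMultiplicity I x.1 (hfin.mem_toFinset.mp x.2) : K) *
          (evalQuot I x.1 (hfin.mem_toFinset.mp x.2) f) ^ j := by
  let e := (Equiv.subtypeEquivRight fun _ => hfin.mem_toFinset).trans (zeroSetEquivAlgHom I)
  have := Fintype.ofEquiv _ e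
  rw [trace_mulLeft_eq_sum_algHom, Finset.attach_eq_univ]
  refine (Fintype.sum_equiv e _ _ fun x => ?_).symm
  rw [localMultiplicity_eq_finrank, map_pow]
  exact rfl

/-- Stickelberger trace formula: for a zero-dimensional ideal `I` with finite zero
set `Z̄` (points `x` with multiplicities `μ(x)`), the trace of multiplication by
`f^j` on `A = K[X₁,…,X_q]/I` equals `∑_{x ∈ Z̄} μ(x)·f(x)^j`. -/
theorem stmt17 {K : Type*} [Field K] [IsAlgClosed K] [CharZero K] {q : ℕ}
    (I : Ideal (MvPolynomial (Fin q) K))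
    [FiniteDimensional K (MvPolynomial (Fin q) K ⧸ I)]
    (hfin : {x : Fin q → K | ∀ p ∈ I, MvPolynomial.eval x p = 0}.Finite)
    (f : MvPolynomial (Fin q) K ⧸ I) (j : ℕ) :
    LinearMap.trace K (MvPolynomial (Fin q) K ⧸ I) (LinearMap.mulLeft K (f ^ j)) =
      ∑ x ∈ hfin.toFinset.attach,
        (localMultiplicity I x.1 (hfin.mem_toFinset.mp x.2) : K) *
          (evalQuot I x.1 (hfin.mem_toFinset.mp x.2) f) ^ j :=
  stmt17_general I hfin f j
end
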